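/- Let Y/X be an abelian cover of multigraphs with automorphism group G and covering map π. Then Pr(Y)^G = cor(Pr(X)); that is, the G-invariant principal divisors of Y are exactly the images under cor of the principal divisors of X. -/

import Mathlib

/-!  Multigraphs in the Serre formalism: a finite vertex set `V`, a finite set
`D` of darts (oriented edges / half-edges) together with a fixed-point-free
involution `inv` (reversing orientation) and a map `head` assigning to each
dart its terminal vertex.  Edges are the orbits of `inv`; loops and multiple
edges are allowed.  -/
structure Multigraph where
  V : Type
  D : Type
  [fintypeV : Fintype V]
  [fintypeD : Fintype D]
  [decEqV : DecidableEq V]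
  [decEqD : DecidableEq D]
  inv : D → D
  head : D → V
  inv_inv : ∀ d, inv (inv d) = d
  inv_ne : ∀ d, inv d ≠ d

namespace Multigraph

attribute [instance] Multigraph.fintypeV Multigraph.fintypeD Multigraph.decEqV Multigraph.decEqD

variable (Z : Multigraph)

/-- the initial vertex of a dart -/
def tail (d : Z.D) : Z.V := Z.head (Z.inv d)

/-- the number of edges `|E|`: each edge consists of exactly two darts -/
def numEdges : ℕ := Fintype.card Z.D / 2

/-- the degree (valency) of a vertex: the number of darts with head `v`;
loops automatically count twice -/
def degree (v : Z.V) : ℕ := (Finset.univ.filter fun d : Z.D => Z.head d = v).card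

/-- the number of darts with tail `v` and head `w`.  For `v ≠ w` this is the
number of edges joining `v` and `w`; for `v = w` it is twice the number of
loops at `v`. -/
def numDarts (v w : Z.V) : ℕ :=
  (Finset.univ.filter fun d : Z.D => Z.tail d = v ∧ Z.head d = w).card

/-- the number of loops at a vertex -/
def numLoops (v : Z.V) : ℕ := Z.numDarts v v / 2

/-- the number of edges between two (distinct) vertices -/
def numEdgesBetween (v w : Z.V) : ℕ := Z.numDarts v w

def Adj (v w : Z.V) : Prop := ∃ d : Z.D, Z.tail d = v ∧ Z.head d = w

/-- a multigraph is connected if it is nonempty and any two vertices are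
joined by a path -/
def Connected : Prop := Nonempty Z.V ∧ ∀ v w : Z.V, Relation.ReflTransGen Z.Adj v w

/-- no vertices of degree one -/
def NoDegreeOne : Prop := ∀ v : Z.V, Z.degree v ≠ 1

/-- adjacency using only darts from `T` -/
def AdjOn (T : Finset Z.D) (v w : Z.V) : Prop := ∃ d ∈ T, Z.tail d = v ∧ Z.head d = w

/-- A spanning tree, described by its (inv-closed) set of darts: it is
connected, spans all vertices, and has `|V| - 1` edges (i.e. `2(|V|-1)`
darts); a connected spanning subgraph with `|V| - 1` edges is exactly a
spanning tree. -/
def IsSpanningTree (T : Finset Z.D) : Prop :=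
  (∀ d ∈ T, Z.inv d ∈ T) ∧ (∀ v w : Z.V, Relation.ReflTransGen (Z.AdjOn T) v w) ∧
    T.card = 2 * (Fintype.card Z.V - 1)

/-- `κ_Z`, the number of spanning trees of `Z` -/
noncomputable def kappa : ℕ := Nat.card {T : Finset Z.D // Z.IsSpanningTree T}

/-- the adjacency matrix: the diagonal entry at `v` is twice the number of
loops at `v`, the off-diagonal entry at `(v, w)` is the number of edges
joining `v` and `w` -/
def adjMatrix : Matrix Z.V Z.V ℤ := Matrix.of fun v w => (Z.numDarts v w : ℤ)

/-- the diagonal degree matrix -/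
def degMatrix : Matrix Z.V Z.V ℤ := Matrix.diagonal fun v => (Z.degree v : ℤ)

/-- `r_Z = |E_Z| - |V_Z| + 1` -/
def r : ℕ := Z.numEdges + 1 - Fintype.card Z.V

/-- the reciprocal `ζ_Z(u)⁻¹` of the Ihara zeta function, defined through the
three-term determinant formula
`ζ_Z(u)⁻¹ = (1 - u²)^(r-1) · det (I - A u + (D - I) u²)`;
it is a polynomial in `u`. -/
noncomputable def zetaInv : Polynomial ℚ :=
  (1 - Polynomial.X ^ 2) ^ (Z.r - 1) *
    Matrix.det
      ((1 : Matrix Z.V Z.V (Polynomial ℚ)) -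
        (Polynomial.X : Polynomial ℚ) • Z.adjMatrix.map (fun a => (a : Polynomial ℚ)) +
        ((Polynomial.X : Polynomial ℚ) ^ 2) • (Z.degMatrix - 1).map (fun a => (a : Polynomial ℚ)))

/-- `ρ_w(w₀)`: the Laplacian entries -/
def rho (w w0 : Z.V) : ℤ :=
  if w = w0 then (Z.degree w0 : ℤ) - 2 * (Z.numLoops w0 : ℤ)
  else -(Z.numEdgesBetween w w0 : ℤ)

/-- the divisor `φ(w₀) = ∑_w ρ_w(w₀) · w` -/
noncomputable def lapDiv (w0 : Z.V) : Z.V →₀ ℤ :=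
  ∑ w : Z.V, Finsupp.single w (Z.rho w w0)

/-- the Laplacian map `φ : Div(Z) → Div(Z)`, on `Div(Z) = Z.V →₀ ℤ`,
sending `w₀` to `∑_w ρ_w(w₀) · w` -/
noncomputable def lap : (Z.V →₀ ℤ) →ₗ[ℤ] Z.V →₀ ℤ :=
  Finsupp.lsum ℤ fun w0 => LinearMap.toSpanSingleton ℤ _ (Z.lapDiv w0)

/-- the degree map `deg : Div(Z) → ℤ` -/
noncomputable def divDeg : (Z.V →₀ ℤ) →ₗ[ℤ] ℤ :=
  Finsupp.lsum ℤ fun _ => (LinearMap.id : ℤ →ₗ[ℤ] ℤ)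

/-- `Div⁰(Z)`, the divisors of degree zero -/
noncomputable def divZero : Submodule ℤ (Z.V →₀ ℤ) := LinearMap.ker Z.divDeg

/-- `Pr(Z)`, the principal divisors: the image of the Laplacian map -/
noncomputable def prin : Submodule ℤ (Z.V →₀ ℤ) := LinearMap.range Z.lap

end Multigraph

/-- A covering map of multigraphs: maps on vertices and darts commuting with
the structure maps which are local isomorphisms (bijections on stars). -/
structure CoveringMap (Y X : Multigraph) where
  vmap : Y.V → X.V
  dmap : Y.D → X.D
  head_map : ∀ d, X.head (dmap d) = vmap (Y.head d)
  inv_map : ∀ d, X.inv (dmap d) = dmap (Y.inv d)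
  vmap_surj : Function.Surjective vmap
  star_bij : ∀ w : Y.V, Set.BijOn dmap {d | Y.head d = w} {d | X.head d = vmap w}

/-- A Galois (regular) cover of multigraphs `Y/X` with automorphism group `G`:
a covering map together with an action of `G` on `Y` by automorphisms of the
cover which is free and transitive on each vertex fiber (so `G` is identified
with the deck transformation group `Aut(Y/X)`). -/
structure GaloisCover (Y X : Multigraph) (G : Type) [Group G] extends CoveringMap Y X where
  actV : G →* Equiv.Perm Y.V
  actD : G →* Equiv.Perm Y.D
  act_head : ∀ g d, Y.head (actD g d) = actV g (Y.head d)
  act_inv : ∀ g d, Y.inv (actD g d) = actD g (Y.inv d)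
  vmap_act : ∀ g w, vmap (actV g w) = vmap w
  dmap_act : ∀ g d, dmap (actD g d) = dmap d
  act_free : ∀ g w, actV g w = w → g = 1
  fiber_trans : ∀ w w' : Y.V, vmap w = vmap w' → ∃ g : G, actV g w = w'

/-- the first non-vanishing Taylor coefficient of a polynomial `p` at `u = 1` -/
noncomputable def leadingCoeffAtOne {K : Type} [Field K] (p : Polynomial K) : K :=
  (Polynomial.taylor 1 p).coeff (p.rootMultiplicity 1)

/-- the idempotent `e_χ = |G|⁻¹ ∑_σ χ(σ) σ⁻¹` of `ℂ[G]` attached to a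
character `χ` of a finite abelian group `G` -/
noncomputable def charIdem {G : Type} [CommGroup G] [Fintype G] (χ : G →* ℂ) :
    MonoidAlgebra ℂ G :=
  (Fintype.card G : ℂ)⁻¹ • ∑ σ : G, χ σ • MonoidAlgebra.single σ⁻¹ (1 : ℂ)

/-- the complex-conjugate character `χ̄` -/
noncomputable def conjChar {G : Type} [CommGroup G] (χ : G →* ℂ) : G →* ℂ :=
  (starRingEnd ℂ).toMonoidHom.comp χ

/-- `e = 1 - e_{χ₁}` where `χ₁` is the trivial character -/
noncomputable def eAug (G : Type) [CommGroup G] [Fintype G] : MonoidAlgebra ℂ G :=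
  1 - charIdem (1 : G →* ℂ)

/-- the augmentation ideal `I_G = ker(s : ℤ[G] → ℤ)`, as an additive
subgroup of `ℤ[G]` -/
noncomputable def augIdeal (G : Type) [CommGroup G] : AddSubgroup (MonoidAlgebra ℤ G) :=
  AddMonoidHom.ker
    (((Finsupp.lsum ℤ fun _ : G => (LinearMap.id : ℤ →ₗ[ℤ] ℤ)).toAddMonoidHom.comp
      MonoidAlgebra.coeffAddEquiv.toAddMonoidHom :
      MonoidAlgebra ℤ G →+ ℤ))

namespace GaloisCover

variable {Y X : Multigraph} {G : Type} [CommGroup G] [Fintype G] (C : GaloisCover Y X G)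

/-- the matrix `A(σ)`, relative to a choice `s` of one vertex `s v` of `Y` in
the fiber of each vertex `v` of `X`: its `(v, v')` entry is twice the number
of loops at `s v` when `v = v'` and `σ = 1`, and otherwise the number of
edges connecting `s v` to `σ · s v'`. -/
noncomputable def Asigma (s : X.V → Y.V) (σ : G) : Matrix X.V X.V ℤ :=
  Matrix.of fun v v' => (Y.numDarts (s v) (C.actV σ (s v')) : ℤ)

/-- `A_χ = ∑_σ χ(σ) A(σ)` -/
noncomputable def Achi (s : X.V → Y.V) (χ : G →* ℂ) : Matrix X.V X.V ℂ :=
  ∑ σ : G, χ σ • (C.Asigma s σ).map fun a => (a : ℂ)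

/-- the reciprocal `L_{Y/X}(u,χ)⁻¹` of the Artin-Ihara L-function, defined
through the three-term determinant formula
`L_{Y/X}(u,χ)⁻¹ = (1 - u²)^(r_X - 1) · det (I - A_χ u + (D - I) u²)`. -/
noncomputable def LInv (s : X.V → Y.V) (χ : G →* ℂ) : Polynomial ℂ :=
  (1 - Polynomial.X ^ 2) ^ (X.r - 1) *
    Matrix.det
      ((1 : Matrix X.V X.V (Polynomial ℂ)) -
        (Polynomial.X : Polynomial ℂ) • (C.Achi s χ).map Polynomial.C +
        ((Polynomial.X : Polynomial ℂ) ^ 2) • (X.degMatrix - 1).map fun a => (a : Polynomial ℂ))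

/-- `θ*_{Y/X}(1) = ∑_χ L*_{Y/X}(1,χ) e_{χ̄} ∈ ℂ[G]` (a finite sum over all
the characters of `G`) -/
noncomputable def thetaStar (s : X.V → Y.V) : MonoidAlgebra ℂ G :=
  ∑ᶠ χ : G →* ℂ, leadingCoeffAtOne (C.LInv s χ) • charIdem (conjChar χ)

/-- `ℓ_{w_i} : Div(Y) → ℤ[G]`, on a vertex `w`: `∑_σ ρ_{w_i}(σ·w) σ⁻¹`
(here `w_i = s v`) -/
noncomputable def ell (s : X.V → Y.V) (v : X.V) (w : Y.V) : MonoidAlgebra ℤ G :=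
  ∑ σ : G, Y.rho (s v) (C.actV σ w) • MonoidAlgebra.single (σ⁻¹ : G) (1 : ℤ)

/-- the `ℤ[G]`-linear extension of `ell` to `Div(Y)` -/
noncomputable def ellD (s : X.V → Y.V) (v : X.V) (Dv : Y.V →₀ ℤ) : MonoidAlgebra ℤ G :=
  Finsupp.sum Dv fun w c => c • C.ell s v w

/-- `det_{ℤ[G]}(φ)`: the determinant of the `ℤ[G]`-linear Laplacian `φ` on the
free `ℤ[G]`-module `Div(Y) = ⊕ᵢ ℤ[G]·wᵢ`, computed in the basis `(wᵢ)ᵢ`,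
i.e. the determinant of the matrix `(ℓ_{w_i}(w_j))_{i,j}`. -/
noncomputable def lapDet (s : X.V → Y.V) : MonoidAlgebra ℤ G :=
  Matrix.det (Matrix.of fun v v' => C.ell s v (s v'))

/-- the action of an element of `ℤ[G]` on `Div(Y)` -/
noncomputable def smulDiv (x : MonoidAlgebra ℤ G) (Dv : Y.V →₀ ℤ) : Y.V →₀ ℤ :=
  Finsupp.sum x.coeff fun σ c => c • Finsupp.mapDomain (C.actV σ) Dv

/-- the action of an element of `ℂ[G]` on `Div(Y) ⊗ ℂ` -/
noncomputable def smulDivC (x : MonoidAlgebra ℂ G) (Dv : Y.V →₀ ℂ) : Y.V →₀ ℂ :=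
  Finsupp.sum x.coeff fun σ c => c • Finsupp.mapDomain (C.actV σ) Dv

/-- `res : Div(Y) → Div(X)`, sending a vertex `w` to `π(w)` -/
noncomputable def res (Dv : Y.V →₀ ℤ) : X.V →₀ ℤ := Finsupp.mapDomain C.vmap Dv

/-- `cor : Div(X) → Div(Y)`, sending a vertex `v` to `∑_{w ∈ π⁻¹(v)} w` -/
noncomputable def cor (Dv : X.V →₀ ℤ) : Y.V →₀ ℤ :=
  Finsupp.equivFunOnFinite.symm fun w => Dv (C.vmap w)

/-- the norm element `N_G = ∑_σ σ` acting on `Div(Y)` -/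
noncomputable def normMap : (Y.V →₀ ℤ) →ₗ[ℤ] Y.V →₀ ℤ :=
  ∑ σ : G, Finsupp.lmapDomain ℤ ℤ (C.actV σ)

end GaloisCover

/-- An intermediate cover of a Galois cover `Y/X`, corresponding to a subgroup
`H ≤ G = Aut(Y/X)`: a multigraph `Z` (the quotient `Y/H`) which is at the
same time a Galois cover of which `Y` is a Galois `H`-cover (with the action
of `H` being the restriction of that of `G`) and a cover of `X`, compatibly
with the covering `Y → X`. -/
structure IntermediateCover {Y X : Multigraph} {G : Type} [Group G]
    (C : GaloisCover Y X G) (H : Subgroup G) where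
  Z : Multigraph
  upper : GaloisCover Y Z ↥H
  lower : CoveringMap Z X
  actV_compat : ∀ (h : ↥H) (w : Y.V), upper.actV h w = C.actV (h : G) w
  actD_compat : ∀ (h : ↥H) (d : Y.D), upper.actD h d = C.actD (h : G) d
  vmap_compat : ∀ w : Y.V, lower.vmap (upper.vmap w) = C.vmap w
  dmap_compat : ∀ d : Y.D, lower.dmap (upper.dmap d) = C.dmap d


/-!
If `P = Δ M` is `G`-invariant, then `Δ (σ M - M) = 0` since deck transformations commute with
the Laplacian, so `σ M - M` is constant by the maximum principle on the connected graph `Y`;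
its degree is `0` because `σ` permutes the vertices, hence `σ M = M`. A `G`-invariant divisor
is constant on the fibres of `π`, i.e. `M = cor Q`, and `Δ ∘ cor = cor ∘ Δ` because `π` is a
bijection on the darts at each vertex, so `P = cor (Δ Q)`. Conversely every `cor Q` is
`G`-invariant and `cor (Δ Q) = Δ (cor Q)`.
-/

open Finset

namespace Multigraph

variable (Z : Multigraph)

lemma head_inv (d : Z.D) : Z.head (Z.inv d) = Z.tail d := rfl

lemma tail_inv (d : Z.D) : Z.tail (Z.inv d) = Z.head d := by
  rw [tail, Z.inv_inv]

lemma numDarts_comm (v w : Z.V) : Z.numDarts v w = Z.numDarts w v := by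
  refine card_nbij' Z.inv Z.inv ?_ ?_ (fun d _ => Z.inv_inv d) (fun d _ => Z.inv_inv d) <;>
    · intro d hd
      simp only [coe_filter, mem_univ, true_and, Set.mem_ofPred_eq, tail_inv, head_inv] at hd ⊢
      exact hd.symm

lemma even_numDarts_self (v : Z.V) : Even (Z.numDarts v v) := by
  set S := univ.filter fun d : Z.D => Z.tail d = v ∧ Z.head d = v
  have hS : ∀ d ∈ S, Z.inv d ∈ S := by
    intro d hd
    simp only [S, mem_filter, mem_univ, true_and, tail_inv, head_inv] at hd ⊢
    exact hd.symm
  -- `inv` pairs off the darts of the loops at `v`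
  have hsum : ∑ _d ∈ S, (1 : ZMod 2) = 0 :=
    sum_involution (fun d _ => Z.inv d) (fun _ _ => by decide) (fun d _ _ => Z.inv_ne d) hS
      (fun d _ => Z.inv_inv d)
  rw [sum_const, nsmul_one, ZMod.natCast_eq_zero_iff] at hsum
  exact even_iff_two_dvd.mpr hsum

lemma rho_eq (w w0 : Z.V) :
    Z.rho w w0 = (if w = w0 then (Z.degree w0 : ℤ) else 0) - Z.numDarts w w0 := by
  rw [rho]
  split_ifs with h
  · subst h
    obtain ⟨k, hk⟩ := Z.even_numDarts_self w
    rw [numLoops, hk, ← two_mul, Nat.mul_div_cancel_left k two_pos]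
    push_cast
    ring
  · rw [numEdgesBetween, zero_sub]

lemma sum_numDarts_mul (f : Z.V → ℤ) (w : Z.V) :
    ∑ v, (Z.numDarts v w : ℤ) * f v = ∑ d ∈ univ.filter (Z.head · = w), f (Z.tail d) := by
  rw [← sum_fiberwise' _ Z.tail f]
  refine sum_congr rfl fun v _ => ?_
  rw [sum_const, filter_filter, nsmul_eq_mul, numDarts]
  simp only [and_comm]

lemma lap_apply (M : Z.V →₀ ℤ) (w : Z.V) :
    Z.lap M w = ∑ w0, Z.rho w w0 * M w0 := by
  rw [lap, Finsupp.lsum_apply, Finsupp.sum_apply, Finsupp.sum_fintype _ _ (by simp)]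
  refine sum_congr rfl fun w0 _ => ?_
  rw [LinearMap.toSpanSingleton_apply, Finsupp.smul_apply, lapDiv, Finsupp.finsetSum_apply,
    sum_eq_single w (by simp_all) (by simp), Finsupp.single_eq_same,
    smul_eq_mul, mul_comm]

lemma lap_apply_eq_sum_darts (M : Z.V →₀ ℤ) (w : Z.V) :
    Z.lap M w = ∑ d ∈ univ.filter (Z.head · = w), (M w - M (Z.tail d)) := by
  simp only [lap_apply, rho_eq, sub_mul, ite_mul, zero_mul, sum_sub_distrib, sum_ite_eq,
    mem_univ, if_true, numDarts_comm Z w, sum_numDarts_mul, sum_const, nsmul_eq_mul, degree]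

variable {Z}

lemma apply_eq_of_lap_eq_zero (hZ : Z.Connected) {M : Z.V →₀ ℤ} (h : Z.lap M = 0) (v w : Z.V) :
    M v = M w := by
  obtain ⟨u⟩ := hZ.1
  obtain ⟨m, -, hm⟩ := exists_max_image univ (fun u => M u) ⟨u, mem_univ u⟩
  -- at a maximum of `M` the terms of `lap M` are `≥ 0` and sum to `0`, so `M` is also
  -- maximal at every neighbour
  have hmax : ∀ u, Relation.ReflTransGen Z.Adj u m → M u = M m := by
    intro u hu
    induction hu using Relation.ReflTransGen.head_induction_on with
    | refl => rfl
    | head hadj _ ih =>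
      obtain ⟨d, rfl, rfl⟩ := hadj
      have hnonneg : ∀ d' ∈ univ.filter (Z.head · = Z.head d),
          0 ≤ M (Z.head d) - M (Z.tail d') :=
        fun d' _ => by linarith [hm (Z.tail d') (mem_univ _)]
      have hzero := (sum_eq_zero_iff_of_nonneg hnonneg).mp
        (by rw [← lap_apply_eq_sum_darts, h, Finsupp.zero_apply]) d (by simp)
      linarith
  rw [hmax v (hZ.2 v m), hmax w (hZ.2 w m)]

lemma eq_of_lap_eq (hZ : Z.Connected) {M N : Z.V →₀ ℤ} (hlap : Z.lap M = Z.lap N)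
    (hsum : ∑ v, M v = ∑ v, N v) : M = N := by
  obtain ⟨u⟩ := hZ.1
  have hconst : ∀ v, (M - N) v = (M - N) u := fun v =>
    apply_eq_of_lap_eq_zero hZ (by rw [map_sub, hlap, sub_self]) v u
  have hu : (M - N) u = 0 := by
    have : ∑ v, (M - N) v = 0 := by simp only [Finsupp.sub_apply, sum_sub_distrib, hsum, sub_self]
    rw [sum_congr rfl fun v _ => hconst v, sum_const, card_univ, nsmul_eq_mul] at this
    exact (mul_eq_zero.mp this).resolve_left
      (by exact_mod_cast (Fintype.card_pos_iff.mpr ⟨u⟩).ne')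
  exact sub_eq_zero.mp (Finsupp.ext fun v => (hconst v).trans hu)

end Multigraph

namespace CoveringMap

variable {Y X : Multigraph} (p : CoveringMap Y X)

lemma tail_dmap (d : Y.D) : X.tail (p.dmap d) = p.vmap (Y.tail d) := by
  rw [Multigraph.tail, p.inv_map, p.head_map, Multigraph.tail]

lemma sum_star_comp_dmap (f : X.D → ℤ) (w : Y.V) :
    ∑ d ∈ univ.filter (Y.head · = w), f (p.dmap d) =
      ∑ d ∈ univ.filter (X.head · = p.vmap w), f d := by
  refine sum_nbij p.dmap ?_ ?_ ?_ fun _ _ => rfl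
  · intro d hd
    simp_all [p.head_map]
  · intro a ha b hb hab
    exact (p.star_bij w).injOn (by simpa using ha) (by simpa using hb) hab
  · intro d hd
    obtain ⟨a, ha, rfl⟩ := (p.star_bij w).surjOn (by simpa using hd)
    exact ⟨a, by simpa using ha, rfl⟩

end CoveringMap

namespace GaloisCover

section Action

variable {Y X : Multigraph} {G : Type} [Group G] (C : GaloisCover Y X G)

lemma tail_actD (σ : G) (d : Y.D) : Y.tail (C.actD σ d) = C.actV σ (Y.tail d) := by
  rw [Multigraph.tail, C.act_inv, C.act_head, Multigraph.tail]

lemma sum_star_actV (σ : G) (f : Y.D → ℤ) (w : Y.V) :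
    ∑ d ∈ univ.filter (Y.head · = C.actV σ w), f d =
      ∑ d ∈ univ.filter (Y.head · = w), f (C.actD σ d) := by
  refine (sum_equiv (C.actD σ) (fun d => ?_) fun _ _ => rfl).symm
  simp [C.act_head]

lemma lap_mapDomain_actV (σ : G) (M : Y.V →₀ ℤ) :
    Y.lap (Finsupp.mapDomain (C.actV σ) M) = Finsupp.mapDomain (C.actV σ) (Y.lap M) := by
  ext w
  obtain ⟨w, rfl⟩ := (C.actV σ).surjective w
  simp only [Finsupp.mapDomain_equiv_apply, Y.lap_apply_eq_sum_darts, sum_star_actV,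
    tail_actD, Equiv.symm_apply_apply]

lemma mapDomain_actV_eq_of_lap (hY : Y.Connected) (σ : G) {M : Y.V →₀ ℤ}
    (h : Finsupp.mapDomain (C.actV σ) (Y.lap M) = Y.lap M) :
    Finsupp.mapDomain (C.actV σ) M = M :=
  Multigraph.eq_of_lap_eq hY (by rw [lap_mapDomain_actV, h]) <| by
    simp only [Finsupp.mapDomain_equiv_apply]
    exact Equiv.sum_comp (C.actV σ).symm M

end Action

variable {Y X : Multigraph} {G : Type} [CommGroup G] (C : GaloisCover Y X G)

lemma cor_apply (Q : X.V →₀ ℤ) (w : Y.V) : C.cor Q w = Q (C.vmap w) := rfl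

lemma lap_cor (Q : X.V →₀ ℤ) : Y.lap (C.cor Q) = C.cor (X.lap Q) := by
  ext w
  simp only [cor_apply, Multigraph.lap_apply_eq_sum_darts, ← C.tail_dmap]
  exact C.sum_star_comp_dmap (fun d => Q (C.vmap w) - Q (X.tail d)) w

lemma mapDomain_actV_cor (σ : G) (Q : X.V →₀ ℤ) :
    Finsupp.mapDomain (C.actV σ) (C.cor Q) = C.cor Q := by
  ext w
  rw [Finsupp.mapDomain_equiv_apply, cor_apply, cor_apply, ← C.vmap_act σ, Equiv.apply_symm_apply]

lemma exists_cor_eq_of_invariant {M : Y.V →₀ ℤ}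
    (hM : ∀ σ : G, Finsupp.mapDomain (C.actV σ) M = M) : ∃ Q : X.V →₀ ℤ, C.cor Q = M := by
  let s := Function.surjInv C.vmap_surj
  refine ⟨Finsupp.equivFunOnFinite.symm fun v => M (s v), Finsupp.ext fun w => ?_⟩
  obtain ⟨σ, hσ⟩ := C.fiber_trans (s (C.vmap w)) w (Function.surjInv_eq C.vmap_surj _)
  calc M (s (C.vmap w))
      = Finsupp.mapDomain (C.actV σ) M (C.actV σ (s (C.vmap w))) := by
        rw [Finsupp.mapDomain_equiv_apply, Equiv.symm_apply_apply]
    _ = M w := by rw [hM σ, hσ]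

end GaloisCover

theorem prin_invariants_eq_cor_of_prin_general (X Y : Multigraph)
    (hYconn : Y.Connected)
    {G : Type} [CommGroup G] (C : GaloisCover Y X G) :
    ∀ P : Y.V →₀ ℤ,
      ((∃ M : Y.V →₀ ℤ, P = Y.lap M) ∧
        ∀ σ : G, Finsupp.mapDomain (C.actV σ) P = P) ↔
      ∃ Q : X.V →₀ ℤ, P = C.cor (X.lap Q) := by
  intro P
  constructor
  · rintro ⟨⟨M, rfl⟩, hP⟩
    obtain ⟨Q, rfl⟩ := C.exists_cor_eq_of_invariant fun σ =>
      C.mapDomain_actV_eq_of_lap hYconn σ (hP σ)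
    exact ⟨Q, C.lap_cor Q⟩
  · rintro ⟨Q, rfl⟩
    exact ⟨⟨C.cor Q, (C.lap_cor Q).symm⟩, fun σ => C.mapDomain_actV_cor σ _⟩

/-- For an abelian cover `Y/X` with automorphism group `G`,
one has `Pr(Y)^G = cor(Pr(X))`: a divisor of `Y` is a `G`-invariant principal
divisor if and only if it is the image under `cor` of a principal divisor of
`X`. -/
theorem prin_invariants_eq_cor_of_prin (X Y : Multigraph)
    (hXconn : X.Connected) (hXdeg : X.NoDegreeOne)
    (hYconn : Y.Connected) (hYdeg : Y.NoDegreeOne)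
    {G : Type} [CommGroup G] [Fintype G] (C : GaloisCover Y X G) :
    ∀ P : Y.V →₀ ℤ,
      ((∃ M : Y.V →₀ ℤ, P = Y.lap M) ∧
        ∀ σ : G, Finsupp.mapDomain (C.actV σ) P = P) ↔
      ∃ Q : X.V →₀ ℤ, P = C.cor (X.lap Q) :=
  prin_invariants_eq_cor_of_prin_general X Y hYconn C
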